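/- arXiv:2002.09330 — 3 statements merged into one kernel-verified Lean document; each statement's English description precedes it below -/
import Mathlib

section
/- Let F, G : ℝ^d × ℝ^d → ℝ^d be globally Lipschitz, λ = 0, and let U : (0,∞) × ℝ^d → ℝ^d be a C¹ solution of ∂_t U + (F(x,U)·∇_x)U = G(x, U) such that (U(t)) converges in the sense of graphs to A_{x₀} as t → 0. For x₁ ∈ ℝ^d, t₁ > 0, let x : (0, t₁] → ℝ^d solve dx/dt = F(x(t), U(t, x(t))), x(t₁) = x₁. Then x(t) → x₀ as t → 0. -/
/-!
Along the characteristic, `u(t) = U(t, x(t))` satisfies `u̇ = G(x, u)` by the chain rule and the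
PDE, so `(x, u)` solves the ODE `(ẋ, u̇) = (F(x, u), G(x, u))` with a vector field of linear growth.
Grönwall's inequality, run backwards from `t₁`, bounds `(x, u)` on `(0, t₁]`; then its derivative is
bounded, so `(x, u)` is Lipschitz and has a limit `(p, q)` as `t → 0⁺`. Graph convergence applied
along any sequence `tₙ ↓ 0` gives `p = x₀`.
-/

open Filter Set Topology

theorem norm_prodMk_le_of_sub_le {X Y X' Y' : Type*} [SeminormedAddCommGroup X]
    [SeminormedAddCommGroup Y] [SeminormedAddCommGroup X'] [SeminormedAddCommGroup Y']
    {F : X → Y → X'} {G : X → Y → Y'} {L : ℝ}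
    (hF : ∀ x u x' u', ‖F x u - F x' u'‖ ≤ L * (‖x - x'‖ + ‖u - u'‖))
    (hG : ∀ x u x' u', ‖G x u - G x' u'‖ ≤ L * (‖x - x'‖ + ‖u - u'‖)) (p : X × Y) :
    ‖(F p.1 p.2, G p.1 p.2)‖ ≤ 2 * |L| * ‖p‖ + ‖(F 0 0, G 0 0)‖ := by
  have hsum : L * (‖p.1‖ + ‖p.2‖) ≤ 2 * |L| * ‖p‖ := by
    have : ‖p.1‖ + ‖p.2‖ ≤ 2 * ‖p‖ := by linarith [norm_fst_le p, norm_snd_le p]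
    nlinarith [le_abs_self L, abs_nonneg L, norm_nonneg p.1, norm_nonneg p.2]
  have hdiff : ‖(F p.1 p.2, G p.1 p.2) - (F 0 0, G 0 0)‖ ≤ 2 * |L| * ‖p‖ := by
    rw [Prod.mk_sub_mk, Prod.norm_mk, max_le_iff]
    refine ⟨?_, ?_⟩
    · have := hF p.1 p.2 0 0
      simp only [sub_zero] at this
      linarith
    · have := hG p.1 p.2 0 0
      simp only [sub_zero] at this
      linarith
  linarith [norm_le_norm_sub_add (F p.1 p.2, G p.1 p.2) (F 0 0, G 0 0)]

section
variable {E : Type*} [NormedAddCommGroup E] [NormedSpace ℝ E]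

theorem norm_le_gronwallBound_of_norm_deriv_left_le {f f' : ℝ → E} {a b K c : ℝ}
    (hK : 0 ≤ K) (hc : 0 ≤ c) (hf : ∀ t ∈ Ioc a b, HasDerivAt f (f' t) t)
    (bound : ∀ t ∈ Ioc a b, ‖f' t‖ ≤ K * ‖f t‖ + c) :
    ∀ t ∈ Ioc a b, ‖f t‖ ≤ gronwallBound ‖f b‖ K c (b - a) := by
  intro t ht
  have hsub : ∀ s ∈ Icc (-b) (-t), -s ∈ Ioc a b := fun s hs =>
    ⟨by linarith [hs.2, ht.1], by linarith [hs.1]⟩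
  have hrev : ∀ s ∈ Icc (-b) (-t), HasDerivAt (fun s => f (-s)) (-f' (-s)) s := fun s hs => by
    simpa [Function.comp_def] using (hf (-s) (hsub s hs)).scomp s (hasDerivAt_neg s)
  have := norm_le_gronwallBound_of_norm_deriv_right_le (f := fun s => f (-s)) (δ := ‖f b‖)
    (fun s hs => (hrev s hs).continuousAt.continuousWithinAt)
    (fun s hs => (hrev s (Ico_subset_Icc_self hs)).hasDerivWithinAt) (by simp)
    (fun s hs => by simpa using bound (-s) (hsub s (Ico_subset_Icc_self hs))) (-t)
    ⟨by linarith [ht.2], le_rfl⟩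
  simp only [neg_neg] at this
  exact this.trans (gronwallBound_mono (norm_nonneg _) hc hK (by linarith [ht.1]))

theorem exists_tendsto_nhdsGT_of_norm_deriv_le [CompleteSpace E] {f f' : ℝ → E} {a b C : ℝ}
    (hab : a < b) (hf : ∀ t ∈ Ioc a b, HasDerivAt f (f' t) t) (bound : ∀ t ∈ Ioc a b, ‖f' t‖ ≤ C) :
    ∃ p, Tendsto f (𝓝[>] a) (𝓝 p) := by
  have hlip : LipschitzOnWith C.toNNReal f (Ioc a b) :=
    (convex_Ioc a b).lipschitzOnWith_of_nnnorm_hasDerivWithin_le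
      (fun t ht => (hf t ht).hasDerivWithinAt)
      (fun t ht => by
        rw [← NNReal.coe_le_coe, coe_nnnorm, Real.coe_toNNReal']
        exact le_max_of_le_left (bound t ht))
  have hne : (𝓝[Ioc a b] a).NeBot := by rw [nhdsWithin_Ioc_eq_nhdsGT hab]; infer_instance
  have hcauchy : Cauchy (map f (𝓝[Ioc a b] a)) :=
    (cauchy_nhds.mono nhdsWithin_le_nhds).map_of_le hlip.uniformContinuousOn inf_le_right
  rw [nhdsWithin_Ioc_eq_nhdsGT hab] at hcauchy
  exact cauchy_map_iff_exists_tendsto.1 hcauchy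

end

theorem stmt_11_general {d : ℕ} (x₀ : EuclideanSpace ℝ (Fin d)) (t₁ : ℝ) (ht₁ : 0 < t₁)
    (L : ℝ)
    (F G : EuclideanSpace ℝ (Fin d) → EuclideanSpace ℝ (Fin d) → EuclideanSpace ℝ (Fin d))
    (hF : ∀ x u x' u', ‖F x u - F x' u'‖ ≤ L * (‖x - x'‖ + ‖u - u'‖))
    (hG : ∀ x u x' u', ‖G x u - G x' u'‖ ≤ L * (‖x - x'‖ + ‖u - u'‖))
    (U : ℝ → EuclideanSpace ℝ (Fin d) → EuclideanSpace ℝ (Fin d))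
    (DU : ℝ → EuclideanSpace ℝ (Fin d) →
      (ℝ × EuclideanSpace ℝ (Fin d) →L[ℝ] EuclideanSpace ℝ (Fin d)))
    (hU : ∀ t, 0 < t → ∀ x,
      HasFDerivAt (fun p : ℝ × EuclideanSpace ℝ (Fin d) => U p.1 p.2) (DU t x) (t, x))
    (hpde : ∀ t, 0 < t → ∀ x, DU t x (1, F x (U t x)) = G x (U t x))
    (hgraph : ∀ (tn : ℕ → ℝ) (xn : ℕ → EuclideanSpace ℝ (Fin d))
      (p q : EuclideanSpace ℝ (Fin d)),
      (∀ n, 0 < tn n) → Filter.Tendsto tn Filter.atTop (nhds 0) →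
      Filter.Tendsto xn Filter.atTop (nhds p) →
      Filter.Tendsto (fun n => U (tn n) (xn n)) Filter.atTop (nhds q) →
      p = x₀)
    (x : ℝ → EuclideanSpace ℝ (Fin d))
    (hx : ∀ t ∈ Set.Ioc (0 : ℝ) t₁, HasDerivAt x (F (x t) (U t (x t))) t) :
    Filter.Tendsto x (nhdsWithin 0 (Set.Ioi 0)) (nhds x₀) := by
  set u := fun t => U t (x t)
  have hu : ∀ t ∈ Ioc 0 t₁, HasDerivAt u (G (x t) (u t)) t := fun t ht => by
    have := (hU t ht.1 (x t)).comp_hasDerivAt t ((hasDerivAt_id t).prodMk (hx t ht))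
    rwa [hpde t ht.1] at this
  have hxu : ∀ t ∈ Ioc 0 t₁,
      HasDerivAt (fun t => (x t, u t)) (F (x t) (u t), G (x t) (u t)) t :=
    fun t ht => (hx t ht).prodMk (hu t ht)
  have hgrowth := norm_prodMk_le_of_sub_le hF hG
  have hbound := norm_le_gronwallBound_of_norm_deriv_left_le (by positivity) (norm_nonneg _) hxu
    (fun t _ => hgrowth (x t, u t))
  obtain ⟨⟨p, q⟩, hlim⟩ := exists_tendsto_nhdsGT_of_norm_deriv_le ht₁ hxu
    (fun t ht => (hgrowth (x t, u t)).trans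
      (add_le_add_left (mul_le_mul_of_nonneg_left (hbound t ht) (by positivity)) _))
  obtain ⟨tn, -, htn_pos, htn⟩ := exists_seq_strictAnti_tendsto (0 : ℝ)
  have htn' : Tendsto tn atTop (𝓝[>] 0) := tendsto_nhdsWithin_iff.2 ⟨htn, .of_forall htn_pos⟩
  have hp : p = x₀ := hgraph tn (x ∘ tn) p q htn_pos htn (hlim.comp htn').fst_nhds
    (hlim.comp htn').snd_nhds
  exact hp ▸ hlim.fst_nhds

/-- If `U` solves `∂ₜU + (F(x,U)·∇ₓ)U = G(x,U)` (case `λ = 0`), `U(t)` converges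
in the sense of graphs to `A_{x₀}` as `t → 0`, and `x(·)` solves the
characteristic ODE `ẋ = F(x, U(t,x))` with `x(t₁) = x₁`, then `x(t) → x₀`. -/
theorem stmt_11 {d : ℕ} (x₀ x₁ : EuclideanSpace ℝ (Fin d)) (t₁ : ℝ) (ht₁ : 0 < t₁)
    (L : ℝ)
    (F G : EuclideanSpace ℝ (Fin d) → EuclideanSpace ℝ (Fin d) → EuclideanSpace ℝ (Fin d))
    (hF : ∀ x u x' u', ‖F x u - F x' u'‖ ≤ L * (‖x - x'‖ + ‖u - u'‖))
    (hG : ∀ x u x' u', ‖G x u - G x' u'‖ ≤ L * (‖x - x'‖ + ‖u - u'‖))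
    (U : ℝ → EuclideanSpace ℝ (Fin d) → EuclideanSpace ℝ (Fin d))
    (DU : ℝ → EuclideanSpace ℝ (Fin d) →
      (ℝ × EuclideanSpace ℝ (Fin d) →L[ℝ] EuclideanSpace ℝ (Fin d)))
    (hU : ∀ t, 0 < t → ∀ x,
      HasFDerivAt (fun p : ℝ × EuclideanSpace ℝ (Fin d) => U p.1 p.2) (DU t x) (t, x))
    (hpde : ∀ t, 0 < t → ∀ x, DU t x (1, F x (U t x)) = G x (U t x))
    (hgraph : ∀ (tn : ℕ → ℝ) (xn : ℕ → EuclideanSpace ℝ (Fin d))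
      (p q : EuclideanSpace ℝ (Fin d)),
      (∀ n, 0 < tn n) → Filter.Tendsto tn Filter.atTop (nhds 0) →
      Filter.Tendsto xn Filter.atTop (nhds p) →
      Filter.Tendsto (fun n => U (tn n) (xn n)) Filter.atTop (nhds q) →
      p = x₀)
    (x : ℝ → EuclideanSpace ℝ (Fin d))
    (hx : ∀ t ∈ Set.Ioc (0 : ℝ) t₁, HasDerivAt x (F (x t) (U t (x t))) t)
    (hx1 : x t₁ = x₁) :
    Filter.Tendsto x (nhdsWithin 0 (Set.Ioi 0)) (nhds x₀) :=
  stmt_11_general x₀ t₁ ht₁ L F G hF hG U DU hU hpde hgraph x hx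
end

section
/- Let λ ≥ 0 and let W : [0, t_f] × ℝ^{2d} → ℝ be a bounded C¹ function satisfying the inequality ∂_t W + b(t, z) · ∇_z W + λ(W(t, z) − W(t, Az + c)) ≥ 0 on (0, t_f] × ℝ^{2d}, where b is a bounded continuous vector field, A a linear map and c a vector, and suppose liminf_{t→0} inf_{|z| ≤ R} W(t, z) ≥ 0 for every R. Assume additionally the comparison/maximum principle that applies to such transport inequalities (Lipschitz b, bounded W). Then W ≥ 0 on (0, t_f] × ℝ^{2d}. -/
/-!
Along a backward characteristic `f' = b(s, f)` (Picard–Lindelöf; `b` is bounded, so it stays in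
a ball and starts where the initial condition makes `W` almost nonnegative), the weighted
function `V = W e^{λs}` satisfies `d/ds V(s, f s) ≥ λ V(s, A (f s) + c)`. Hence a lower bound
`V ≥ -β` everywhere improves to `V ≥ -B` with `B' = λ β`. Starting from `V ≥ -K` and iterating
gives `V ≥ -K (λ t)ⁿ / n!` for every `n`, and letting `n → ∞` gives `V ≥ 0`.
-/

open Set Filter Topology Real
open scoped NNReal Nat

noncomputable def expTerm (K lam : ℝ) (n : ℕ) (s : ℝ) : ℝ := K * ((lam * s) ^ n / n !)

theorem expTerm_zero (K lam s : ℝ) : expTerm K lam 0 s = K := by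
  simp [expTerm]

theorem expTerm_nonneg {K lam s : ℝ} (hK : 0 ≤ K) (hlam : 0 ≤ lam) (hs : 0 ≤ s) (n : ℕ) :
    0 ≤ expTerm K lam n s := by
  unfold expTerm
  have := mul_nonneg hlam hs
  positivity

theorem hasDerivAt_expTerm_succ (K lam : ℝ) (n : ℕ) (s : ℝ) :
    HasDerivAt (expTerm K lam (n + 1)) (lam * expTerm K lam n s) s := by
  have hlin : HasDerivAt (fun s => lam * s) lam s := by
    simpa using (hasDerivAt_id s).const_mul lam
  refine (((hlin.fun_pow (n + 1)).div_const ((n + 1)! : ℝ)).const_mul K).congr_deriv ?_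
  rw [expTerm, Nat.factorial_succ, Nat.add_sub_cancel]
  push_cast
  field_simp

theorem tendsto_expTerm_atTop (K lam s : ℝ) :
    Tendsto (fun n => expTerm K lam n s) atTop (𝓝 0) := by
  simpa [expTerm] using (FloorSemiring.tendsto_pow_div_factorial_atTop (lam * s)).const_mul K

theorem le_of_hasDerivWithinAt_Icc_nonneg {g g' : ℝ → ℝ} {a b : ℝ} (hab : a ≤ b)
    (hg : ∀ s ∈ Icc a b, HasDerivWithinAt g (g' s) (Icc a b) s)
    (hg' : ∀ s ∈ Icc a b, 0 ≤ g' s) : g a ≤ g b := by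
  refine monotoneOn_of_hasDerivWithinAt_nonneg (f' := g') (convex_Icc a b)
    (fun s hs => (hg s hs).continuousWithinAt) (fun s hs => ?_) (fun s hs => ?_)
    (left_mem_Icc.2 hab) (right_mem_Icc.2 hab) hab
  · exact (hg s (interior_subset hs)).mono interior_subset
  · exact hg' s (interior_subset hs)

section

variable {E : Type*} [NormedAddCommGroup E] [NormedSpace ℝ E]

theorem exists_backward_characteristic [CompleteSpace E] {b : ℝ → E → E} {M : ℝ} {L : ℝ≥0}
    (hb : ∀ x, Continuous (b · x)) (hbM : ∀ s x, ‖b s x‖ ≤ M) (hbL : ∀ s, LipschitzWith L (b s))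
    {δ t : ℝ} (hδt : δ ≤ t) (z : E) :
    ∃ f : ℝ → E, f t = z ∧ (∀ s ∈ Icc δ t, HasDerivWithinAt f (b s (f s)) (Icc δ t) s) ∧
      ‖f δ‖ ≤ ‖z‖ + M * (t - δ) := by
  have hM : 0 ≤ M := (norm_nonneg _).trans (hbM 0 0)
  have hpl : IsPicardLindelof b (tmin := δ) (tmax := t) ⟨t, hδt, le_rfl⟩ z
      (M * (t - δ)).toNNReal 0 M.toNNReal L := by
    refine ⟨fun s _ => (hbL s).lipschitzOnWith, fun x _ => (hb x).continuousOn,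
      fun s _ x _ => ?_, ?_⟩
    · simpa [Real.coe_toNNReal _ hM] using hbM s x
    · simp [Real.coe_toNNReal _ hM, sub_nonneg.2 hδt]
  obtain ⟨f, hft, hf⟩ := hpl.exists_eq_forall_mem_Icc_hasDerivWithinAt₀
  refine ⟨f, hft, hf, ?_⟩
  have hdisp := (convex_Icc δ t).norm_image_sub_le_of_norm_hasDerivWithin_le hf
    (fun s _ => hbM s (f s)) (right_mem_Icc.2 hδt) (left_mem_Icc.2 hδt)
  have hft' : f t = z := hft
  rw [hft', Real.norm_eq_abs, abs_sub_comm, abs_of_nonneg (sub_nonneg.2 hδt)] at hdisp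
  calc ‖f δ‖ ≤ ‖z‖ + ‖f δ - z‖ := norm_le_insert' _ _
    _ ≤ ‖z‖ + M * (t - δ) := by linarith

theorem weighted_le_along_characteristic {tf lam δ t : ℝ} {W : ℝ → E → ℝ} {b : ℝ → E → E}
    {σ : E → E} {DW : ℝ → E → (ℝ × E →L[ℝ] ℝ)} {β B : ℝ → ℝ} {f : ℝ → E} (hlam : 0 ≤ lam)
    (hW : ∀ t ∈ Ioc 0 tf, ∀ z, HasFDerivAt (fun p : ℝ × E => W p.1 p.2) (DW t z) (t, z))
    (hineq : ∀ t ∈ Ioc 0 tf, ∀ z, 0 ≤ DW t z (1, b t z) + lam * (W t z - W t (σ z)))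
    (hβ : ∀ s ∈ Ioc 0 tf, ∀ y, -β s ≤ W s y * exp (lam * s))
    (hB : ∀ s, HasDerivAt B (lam * β s) s) (hδ : 0 < δ) (hδt : δ ≤ t) (htf : t ≤ tf)
    (hf : ∀ s ∈ Icc δ t, HasDerivWithinAt f (b s (f s)) (Icc δ t) s) :
    W δ (f δ) * exp (lam * δ) + B δ ≤ W t (f t) * exp (lam * t) + B t := by
  have hsub : Icc δ t ⊆ Ioc 0 tf := fun s hs => ⟨hδ.trans_le hs.1, hs.2.trans htf⟩
  refine le_of_hasDerivWithinAt_Icc_nonneg (g := fun s => W s (f s) * exp (lam * s) + B s)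
    (g' := fun s => (DW s (f s) (1, b s (f s)) + lam * W s (f s)) * exp (lam * s) + lam * β s)
    hδt (fun s hs => ?_) (fun s hs => ?_)
  · have hWf : HasDerivWithinAt (fun s => W s (f s)) (DW s (f s) (1, b s (f s))) (Icc δ t) s :=
      (hW s (hsub hs) (f s)).comp_hasDerivWithinAt (f := fun s => (s, f s)) s
        ((hasDerivWithinAt_id s _).prodMk (hf s hs))
    have hexp : HasDerivAt (fun s => exp (lam * s)) (exp (lam * s) * lam) s := by
      simpa using ((hasDerivAt_id s).const_mul lam).exp
    refine ((hWf.mul hexp.hasDerivWithinAt).add (hB s).hasDerivWithinAt).congr_deriv ?_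
    ring
  · have hjump : lam * W s (σ (f s)) ≤ DW s (f s) (1, b s (f s)) + lam * W s (f s) := by
      linarith [hineq s (hsub hs) (f s)]
    have hjump' := mul_le_mul_of_nonneg_right hjump (exp_pos (lam * s)).le
    have hprev : 0 ≤ lam * (W s (σ (f s)) * exp (lam * s) + β s) :=
      mul_nonneg hlam (by linarith [hβ s (hsub hs) (σ (f s))])
    linarith

theorem weighted_lower_bound_of_characteristics [CompleteSpace E] {tf lam Mb : ℝ} {Lb : ℝ≥0}
    {W : ℝ → E → ℝ} {b : ℝ → E → E} {σ : E → E} {DW : ℝ → E → (ℝ × E →L[ℝ] ℝ)} {β B : ℝ → ℝ}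
    (hlam : 0 ≤ lam)
    (hW : ∀ t ∈ Ioc 0 tf, ∀ z, HasFDerivAt (fun p : ℝ × E => W p.1 p.2) (DW t z) (t, z))
    (hineq : ∀ t ∈ Ioc 0 tf, ∀ z, 0 ≤ DW t z (1, b t z) + lam * (W t z - W t (σ z)))
    (hβ : ∀ s ∈ Ioc 0 tf, ∀ y, -β s ≤ W s y * exp (lam * s))
    (hB : ∀ s, HasDerivAt B (lam * β s) s) (hB₀ : ∀ s ∈ Ioc 0 tf, 0 ≤ B s)
    (hb : ∀ x, Continuous (b · x)) (hbM : ∀ s x, ‖b s x‖ ≤ Mb) (hbL : ∀ s, LipschitzWith Lb (b s))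
    (hinit : ∀ ε > (0 : ℝ), ∀ R : ℝ, ∃ t₀ > (0 : ℝ), ∀ t, 0 < t → t ≤ t₀ → t ≤ tf →
      ∀ z, ‖z‖ ≤ R → -ε ≤ W t z) :
    ∀ t ∈ Ioc 0 tf, ∀ z, -B t ≤ W t z * exp (lam * t) := by
  intro t ht z
  have hMb : 0 ≤ Mb := (norm_nonneg _).trans (hbM 0 0)
  refine le_of_forall_pos_le_add fun ε hε => ?_
  obtain ⟨t₀, ht₀, hsmall⟩ := hinit (ε * exp (-(lam * t))) (by positivity) (‖z‖ + Mb * t)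
  set δ := min t₀ t
  have hδ : 0 < δ := lt_min ht₀ ht.1
  have hδt : δ ≤ t := min_le_right _ _
  obtain ⟨f, hft, hf, hfδ⟩ := exists_backward_characteristic hb hbM hbL hδt z
  have hWδ : -(ε * exp (-(lam * t))) ≤ W δ (f δ) :=
    hsmall δ hδ (min_le_left _ _) (hδt.trans ht.2) (f δ) (by nlinarith)
  -- the tolerance `ε e^{-λt}` absorbs the weight `e^{λδ} ≤ e^{λt}`
  have hVδ : -ε ≤ W δ (f δ) * exp (lam * δ) := by
    have hexp : exp (lam * δ) ≤ exp (lam * t) := exp_le_exp.2 (by gcongr)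
    have hcancel : exp (-(lam * t)) * exp (lam * t) = 1 := by rw [← exp_add]; simp
    nlinarith [mul_le_mul_of_nonneg_right hWδ (exp_pos (lam * δ)).le,
      mul_le_mul_of_nonneg_left hexp (by positivity : 0 ≤ ε * exp (-(lam * t)))]
  have hchar := weighted_le_along_characteristic hlam hW hineq hβ hB hδ hδt ht.2 hf
  rw [hft] at hchar
  linarith [hB₀ δ ⟨hδ, hδt.trans ht.2⟩]

end

theorem stmt_18_general {m : ℕ} (tf lam Lb Mb MW : ℝ) (hlam : 0 ≤ lam)
    (W : ℝ → EuclideanSpace ℝ (Fin m) → ℝ)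
    (b : ℝ → EuclideanSpace ℝ (Fin m) → EuclideanSpace ℝ (Fin m))
    (A : EuclideanSpace ℝ (Fin m) →L[ℝ] EuclideanSpace ℝ (Fin m))
    (c : EuclideanSpace ℝ (Fin m))
    (DW : ℝ → EuclideanSpace ℝ (Fin m) →
      (ℝ × EuclideanSpace ℝ (Fin m) →L[ℝ] ℝ))
    (hW : ∀ t ∈ Set.Ioc (0 : ℝ) tf, ∀ z,
      HasFDerivAt (fun p : ℝ × EuclideanSpace ℝ (Fin m) => W p.1 p.2) (DW t z) (t, z))
    (hWbdd : ∀ t ∈ Set.Ioc (0 : ℝ) tf, ∀ z, |W t z| ≤ MW)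
    (hbcont : Continuous fun p : ℝ × EuclideanSpace ℝ (Fin m) => b p.1 p.2)
    (hbbdd : ∀ t z, ‖b t z‖ ≤ Mb)
    (hblip : ∀ t z z', ‖b t z - b t z'‖ ≤ Lb * ‖z - z'‖)
    (hineq : ∀ t ∈ Set.Ioc (0 : ℝ) tf, ∀ z,
      0 ≤ DW t z (1, b t z) + lam * (W t z - W t (A z + c)))
    (hinit : ∀ ε > (0 : ℝ), ∀ R : ℝ, ∃ t₀ > (0 : ℝ), ∀ t, 0 < t → t ≤ t₀ → t ≤ tf →
      ∀ z, ‖z‖ ≤ R → -ε ≤ W t z) :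
    ∀ t ∈ Set.Ioc (0 : ℝ) tf, ∀ z, 0 ≤ W t z := by
  intro t ht z
  have hMW : 0 ≤ MW := (abs_nonneg _).trans (hWbdd t ht z)
  have hb : ∀ x, Continuous (b · x) := fun x =>
    hbcont.comp (continuous_id.prodMk continuous_const)
  have hbL : ∀ s, LipschitzWith Lb.toNNReal (b s) := fun s =>
    LipschitzWith.of_dist_le' fun x y => by simpa only [dist_eq_norm] using hblip s x y
  have hbound : ∀ n : ℕ, ∀ s ∈ Ioc 0 tf, ∀ y,
      -expTerm (MW * exp (lam * tf)) lam n s ≤ W s y * exp (lam * s) := by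
    intro n
    induction n with
    | zero =>
      intro s hs y
      have hWsy := neg_le_of_abs_le (hWbdd s hs y)
      have hexp := exp_le_exp.2 (mul_le_mul_of_nonneg_left hs.2 hlam)
      rw [expTerm_zero]
      nlinarith [exp_pos (lam * s)]
    | succ n ih =>
      exact weighted_lower_bound_of_characteristics hlam hW hineq ih
        (hasDerivAt_expTerm_succ _ _ n) (fun s hs => expTerm_nonneg (by positivity) hlam hs.1.le _)
        hb hbbdd hbL hinit
  have hV : 0 ≤ W t z * exp (lam * t) :=
    le_of_tendsto' (by simpa using (tendsto_expTerm_atTop _ lam t).neg) (hbound · t ht z)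
  exact nonneg_of_mul_nonneg_left hV (exp_pos _)

/-- Maximum principle for the nonlocal transport inequality: if a bounded `C¹`
function `W` satisfies `∂ₜW + b·∇W + λ(W - W(t, Az + c)) ≥ 0` on `(0,t_f] × ℝ^m`
with `b` bounded, continuous and Lipschitz in `z`, and
`liminf_{t→0} inf_{|z|≤R} W(t,z) ≥ 0` for every `R`, then `W ≥ 0`. -/
theorem stmt_18 {m : ℕ} (tf lam Lb Mb MW : ℝ) (htf : 0 < tf) (hlam : 0 ≤ lam)
    (W : ℝ → EuclideanSpace ℝ (Fin m) → ℝ)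
    (b : ℝ → EuclideanSpace ℝ (Fin m) → EuclideanSpace ℝ (Fin m))
    (A : EuclideanSpace ℝ (Fin m) →L[ℝ] EuclideanSpace ℝ (Fin m))
    (c : EuclideanSpace ℝ (Fin m))
    (DW : ℝ → EuclideanSpace ℝ (Fin m) →
      (ℝ × EuclideanSpace ℝ (Fin m) →L[ℝ] ℝ))
    (hW : ∀ t ∈ Set.Ioc (0 : ℝ) tf, ∀ z,
      HasFDerivAt (fun p : ℝ × EuclideanSpace ℝ (Fin m) => W p.1 p.2) (DW t z) (t, z))
    (hWbdd : ∀ t ∈ Set.Ioc (0 : ℝ) tf, ∀ z, |W t z| ≤ MW)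
    (hbcont : Continuous fun p : ℝ × EuclideanSpace ℝ (Fin m) => b p.1 p.2)
    (hbbdd : ∀ t z, ‖b t z‖ ≤ Mb)
    (hblip : ∀ t z z', ‖b t z - b t z'‖ ≤ Lb * ‖z - z'‖)
    (hineq : ∀ t ∈ Set.Ioc (0 : ℝ) tf, ∀ z,
      0 ≤ DW t z (1, b t z) + lam * (W t z - W t (A z + c)))
    (hinit : ∀ ε > (0 : ℝ), ∀ R : ℝ, ∃ t₀ > (0 : ℝ), ∀ t, 0 < t → t ≤ t₀ → t ≤ tf →
      ∀ z, ‖z‖ ≤ R → -ε ≤ W t z) :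
    ∀ t ∈ Set.Ioc (0 : ℝ) tf, ∀ z, 0 ≤ W t z :=
  stmt_18_general tf lam Lb Mb MW hlam W b A c DW hW hWbdd hbcont hbbdd hblip hineq hinit
end

section
/- Let U_ε : [0,T] × ℝ^d → ℝ^d be a C¹ solution of ∂_t U − εΔU + (F(x,U)·∇_x)U + λ(U − (DT)*U(Tx)) = G(x,U) with U(0,·) = U₀, where F, G, U₀ are Lipschitz and ‖D_xU_ε(t,x)‖ ≤ C uniformly. Suppose there exist C₁, η > 0 and a point (t₀, x₀, i) with t₀ small at which U^i_ε(t₀,x₀) = U₀^i(x₀) + C₁t₀(1+|x₀|) + η is attained as a first touching point from below of the barrier, so that ∂_t U^i_ε(t₀,x₀) ≥ C₁(1+|x₀|), ∇_x U^i_ε(t₀,x₀) = ∇_x U₀^i(x₀) + C₁t₀·(x₀/|x₀|-type term bounded by C₁t₀), and −ΔU^i_ε(t₀,x₀) ≥ 0. Then C₁(1+|x₀|) ≤ δ(1 + |x₀| + |U_ε(t₀,x₀)|) for a constant δ depending only on the Lipschitz constants of F, G, on λ, T and C, and not on C₁ or η. -/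
set_option maxHeartbeats 1000000

open scoped RealInnerProductSpace

lemma abs_apply_le_norm' {d : ℕ} (v : EuclideanSpace ℝ (Fin d)) (i : Fin d) :
    |v i| ≤ ‖v‖ := by
  have h := abs_real_inner_le_norm (EuclideanSpace.single i (1:ℝ)) v
  simpa [EuclideanSpace.inner_single_left, EuclideanSpace.norm_single] using h

/-- The barrier argument in the existence proof: evaluating the penalized PDE
at a first touching point of the barrier `U₀^i(x) + C₁t(1+|x|) + η` yields
`C₁(1+|x₀|) ≤ δ(1+|x₀|+|U_ε(t₀,x₀)|)` for a constant `δ` depending only on the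
growth/Lipschitz constants of `F, G`, on `λ`, `T` and the gradient bound `C`,
and not on `C₁` or `η`. -/
theorem stmt_19 {d : ℕ} (LF LG lam C : ℝ)
    (hLF : 0 ≤ LF) (hLG : 0 ≤ LG) (hlam : 0 ≤ lam) (hC : 0 ≤ C)
    (DT : EuclideanSpace ℝ (Fin d) →L[ℝ] EuclideanSpace ℝ (Fin d))
    (c : EuclideanSpace ℝ (Fin d))
    (F G : EuclideanSpace ℝ (Fin d) → EuclideanSpace ℝ (Fin d) → EuclideanSpace ℝ (Fin d))
    (hF : ∀ x u, ‖F x u‖ ≤ LF * (1 + ‖x‖ + ‖u‖))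
    (hG : ∀ x u, ‖G x u‖ ≤ LG * (1 + ‖x‖ + ‖u‖)) :
    ∃ δ : ℝ, 0 < δ ∧
      ∀ (Uε : ℝ → EuclideanSpace ℝ (Fin d) → EuclideanSpace ℝ (Fin d))
        (U₀ : EuclideanSpace ℝ (Fin d) → EuclideanSpace ℝ (Fin d))
        (ε C₁ η t₀ : ℝ) (x₀ : EuclideanSpace ℝ (Fin d)) (i : Fin d)
        (pt lap : ℝ) (gx g0 : EuclideanSpace ℝ (Fin d)),
        0 < ε → 0 < C₁ → 0 < η → 0 < t₀ →
        -- uniform gradient bound / Lipschitz estimate in x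
        (∀ x y, ‖Uε t₀ x - Uε t₀ y‖ ≤ C * ‖x - y‖) →
        -- touching-point conditions
        Uε t₀ x₀ i = U₀ x₀ i + C₁ * t₀ * (1 + ‖x₀‖) + η →
        C₁ * (1 + ‖x₀‖) ≤ pt →
        lap ≤ 0 →
        ‖gx‖ ≤ C →
        ‖gx - g0‖ ≤ C₁ * t₀ →
        -- the penalized PDE, evaluated componentwise at the touching point
        (pt - ε * lap + ⟪F x₀ (Uε t₀ x₀), gx⟫
            + lam * (Uε t₀ x₀ i
              - (ContinuousLinearMap.adjoint DT) (Uε t₀ (DT x₀ + c)) i)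
          = G x₀ (Uε t₀ x₀) i) →
        C₁ * (1 + ‖x₀‖) ≤ δ * (1 + ‖x₀‖ + ‖Uε t₀ x₀‖) := by
  set K : ℝ := (1 + ‖DT‖) + ‖DT‖ * C * (1 + ‖DT‖) + ‖DT‖ * C * ‖c‖ with hK
  have hKnn : 0 ≤ K := by positivity
  refine ⟨1 + LG + LF * C + lam * K, by positivity, ?_⟩
  intro Uε U₀ ε C₁ η t₀ x₀ i pt lap gx g0 hε hC₁ hη ht₀ hLip htouch hpt hlap hgx hgxg0 hPDE
  set U : EuclideanSpace ℝ (Fin d) := Uε t₀ x₀ with hU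
  set S : ℝ := 1 + ‖x₀‖ + ‖U‖ with hS
  have hSx : ‖x₀‖ ≤ S := by have := norm_nonneg U; simp [hS]; linarith
  have hSU : ‖U‖ ≤ S := by have := norm_nonneg x₀; simp [hS]; linarith
  have hS1 : (1:ℝ) ≤ S := by have := norm_nonneg x₀; have := norm_nonneg U; simp [hS]; linarith
  have hS0 : (0:ℝ) ≤ S := by linarith
  -- bound the inner product term
  have hInner : |⟪F x₀ U, gx⟫| ≤ LF * C * S := by
    calc |⟪F x₀ U, gx⟫| ≤ ‖F x₀ U‖ * ‖gx‖ := abs_real_inner_le_norm _ _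
      _ ≤ (LF * S) * C := by
          apply mul_le_mul (hF x₀ U) hgx (norm_nonneg _) (by positivity)
      _ = LF * C * S := by ring
  -- bound the G term
  have hGb : |G x₀ U i| ≤ LG * S := (abs_apply_le_norm' _ i).trans (hG x₀ U)
  -- bound the λ term
  set y : EuclideanSpace ℝ (Fin d) := DT x₀ + c with hy
  have hUy : ‖Uε t₀ y‖ ≤ ‖U‖ + C * ((‖DT‖ + 1) * ‖x₀‖ + ‖c‖) := by
    have h1 : ‖Uε t₀ y - U‖ ≤ C * ‖y - x₀‖ := hLip y x₀
    have h2 : ‖y - x₀‖ ≤ (‖DT‖ + 1) * ‖x₀‖ + ‖c‖ := by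
      calc ‖y - x₀‖ = ‖DT x₀ + c - x₀‖ := by rw [hy]
        _ ≤ ‖DT x₀‖ + ‖c‖ + ‖x₀‖ := by
            calc ‖DT x₀ + c - x₀‖ ≤ ‖DT x₀ + c‖ + ‖x₀‖ := norm_sub_le _ _
              _ ≤ ‖DT x₀‖ + ‖c‖ + ‖x₀‖ := by linarith [norm_add_le (DT x₀) c]
        _ ≤ (‖DT‖ + 1) * ‖x₀‖ + ‖c‖ := by
            have := DT.le_opNorm x₀; nlinarith [norm_nonneg x₀]
    have h3 : ‖Uε t₀ y‖ ≤ ‖U‖ + C * ‖y - x₀‖ := by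
      have := norm_sub_norm_le (Uε t₀ y) U; linarith
    nlinarith
  have hAdj : ‖ContinuousLinearMap.adjoint DT‖ = ‖DT‖ :=
    ContinuousLinearMap.adjoint.norm_map DT
  have hA : |U i - (ContinuousLinearMap.adjoint DT) (Uε t₀ y) i| ≤ K * S := by
    have h1 : |U i - (ContinuousLinearMap.adjoint DT) (Uε t₀ y) i|
        ≤ |U i| + |(ContinuousLinearMap.adjoint DT) (Uε t₀ y) i| := abs_sub _ _
    have h2 : |U i| ≤ ‖U‖ := abs_apply_le_norm' _ i
    have h3 : |(ContinuousLinearMap.adjoint DT) (Uε t₀ y) i|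
        ≤ ‖DT‖ * ‖Uε t₀ y‖ := by
      refine (abs_apply_le_norm' _ i).trans ?_
      have := (ContinuousLinearMap.adjoint DT).le_opNorm (Uε t₀ y)
      rwa [hAdj] at this
    have h4 : ‖DT‖ * ‖Uε t₀ y‖ ≤ ‖DT‖ * (‖U‖ + C * ((‖DT‖ + 1) * ‖x₀‖ + ‖c‖)) :=
      mul_le_mul_of_nonneg_left hUy (norm_nonneg _)
    have hDTnn : (0:ℝ) ≤ ‖DT‖ := norm_nonneg _
    have hcnn : (0:ℝ) ≤ ‖c‖ := norm_nonneg _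
    have hKS : ‖U‖ + ‖DT‖ * (‖U‖ + C * ((‖DT‖ + 1) * ‖x₀‖ + ‖c‖)) ≤ K * S := by
      rw [hK]
      have a1 : (1 + ‖DT‖) * ‖U‖ ≤ (1 + ‖DT‖) * S :=
        mul_le_mul_of_nonneg_left hSU (by positivity)
      have a2 : ‖DT‖ * C * (1 + ‖DT‖) * ‖x₀‖ ≤ ‖DT‖ * C * (1 + ‖DT‖) * S :=
        mul_le_mul_of_nonneg_left hSx (by positivity)
      have a3 : ‖DT‖ * C * ‖c‖ * 1 ≤ ‖DT‖ * C * ‖c‖ * S :=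
        mul_le_mul_of_nonneg_left hS1 (by positivity)
      nlinarith [a1, a2, a3]
    linarith
  -- combine
  have hεlap : ε * lap ≤ 0 := mul_nonpos_of_nonneg_of_nonpos hε.le hlap
  have hlamA : lam * (U i - (ContinuousLinearMap.adjoint DT) (Uε t₀ y) i)
      ≥ -(lam * (K * S)) := by
    have := mul_le_mul_of_nonneg_left hA hlam
    have habs := neg_abs_le (U i - (ContinuousLinearMap.adjoint DT) (Uε t₀ y) i)
    have := mul_le_mul_of_nonneg_left habs hlam
    nlinarith
  have hptb : pt ≤ LG * S + LF * C * S + lam * (K * S) := by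
    have h1 : pt = G x₀ U i - ⟪F x₀ U, gx⟫
        - lam * (U i - (ContinuousLinearMap.adjoint DT) (Uε t₀ y) i) + ε * lap := by
      rw [hU, hy]; linarith [hPDE]
    have h2 : G x₀ U i ≤ LG * S := (le_abs_self _).trans hGb
    have h3 : -⟪F x₀ U, gx⟫ ≤ LF * C * S := (neg_le_abs _).trans hInner
    linarith
  have hfin : LG * S + LF * C * S + lam * (K * S) ≤ (1 + LG + LF * C + lam * K) * S := by
    nlinarith
  calc C₁ * (1 + ‖x₀‖) ≤ pt := hpt
    _ ≤ (1 + LG + LF * C + lam * K) * S := by linarith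
end
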